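/- (Tail integral bound used in the precoding Proposition.) Let t ≥ 1. There exists δ₀ > 0 (depending only on t) such that for all δ ∈ (0, δ₀) and all P > 0: ∫_{t/(δP)}^∞ Q(√(2·x·P/t))·x^{t−1}·exp(−x)/Γ(t) dx ≤ δ/P^t. (Indeed, using Q(y) ≤ exp(−y²) for y ≥ 0, the left side is at most (t^t/P^t)·exp(−1/δ)·Σ_{k=0}^{t−1} δ^{−k}/k!, which is at most δ/P^t for sufficiently small δ.) -/

import Mathlib

/-- The Gaussian tail function `Q(x) = (1/√(2π)) ∫_x^∞ exp(-u²/2) du`. -/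
noncomputable def gaussianQ (x : ℝ) : ℝ :=
  (Real.sqrt (2 * Real.pi))⁻¹ * ∫ u in Set.Ioi x, Real.exp (-(u ^ 2) / 2)

/-!
Since `Q(y) ≤ exp(-y²/2)/2`, the integrand is at most `x^(t-1) exp(-xP/t) / (2 (t-1)!)`. Half of the
exponential absorbs the polynomial through `x^k/k! ≤ exp x`; the other half, integrated over
`(t/(δP), ∞)`, contributes the factor `exp(-1/(2δ)) ≤ 8δ²`, which beats `δ` for small `δ`.
-/

open MeasureTheory Set Real
open scoped Nat

lemma gaussianQ_nonneg (x : ℝ) : 0 ≤ gaussianQ x :=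
  mul_nonneg (by positivity) (integral_nonneg fun _ ↦ (exp_pos _).le)

lemma setIntegral_Ioi_eq_setIntegral_Ioi_zero_add (f : ℝ → ℝ) (y : ℝ) :
    ∫ u in Ioi y, f u = ∫ s in Ioi 0, f (s + y) := by
  rw [← (measurePreserving_add_right volume y).setIntegral_preimage_emb
    (measurableEmbedding_addRight y), preimage_add_const_Ioi, sub_self]

theorem gaussianQ_le_half_exp {y : ℝ} (hy : 0 ≤ y) : gaussianQ y ≤ exp (-(y ^ 2) / 2) / 2 := by
  have hshift : ∫ u in Ioi y, exp (-(u ^ 2) / 2)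
      ≤ ∫ s in Ioi 0, exp (-(y ^ 2) / 2) * exp (-(1 / 2) * s ^ 2) := by
    rw [setIntegral_Ioi_eq_setIntegral_Ioi_zero_add]
    refine integral_mono_of_nonneg (.of_forall fun _ ↦ (exp_pos _).le)
      ((integrable_exp_neg_mul_sq (by norm_num)).const_mul _).integrableOn ?_
    filter_upwards [ae_restrict_mem measurableSet_Ioi] with s (hs : 0 < s)
    -- `(s + y)² ≥ y² + s²` for `s, y ≥ 0`
    rw [← exp_add]
    exact exp_le_exp.2 (by nlinarith)
  rw [integral_const_mul, integral_gaussian_Ioi, show π / (1 / 2) = 2 * π by ring] at hshift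
  have hsqrt : 0 < √(2 * π) := by positivity
  calc gaussianQ y ≤ (√(2 * π))⁻¹ * (exp (-(y ^ 2) / 2) * (√(2 * π) / 2)) :=
        mul_le_mul_of_nonneg_left hshift (by positivity)
    _ = exp (-(y ^ 2) / 2) / 2 := by field_simp

lemma pow_div_factorial_mul_exp_neg_le {s x : ℝ} (hs : 0 < s) (hx : 0 ≤ x) (k : ℕ) :
    x ^ k / k ! * exp (-(s * x)) ≤ (2 / s) ^ k * exp (-(s / 2) * x) := by
  have hk := pow_div_factorial_le_exp (x := s / 2 * x) (by positivity) k
  have hsplit : exp (-(s * x)) = exp (-(s / 2) * x) * exp (-(s / 2 * x)) := by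
    rw [← exp_add]; ring_nf
  calc x ^ k / k ! * exp (-(s * x))
      = (2 / s) ^ k * exp (-(s / 2) * x) * ((s / 2 * x) ^ k / k ! * exp (-(s / 2 * x))) := by
        rw [hsplit, show x ^ k = (2 / s) ^ k * (s / 2 * x) ^ k by rw [← mul_pow]; field_simp]
        ring
    _ ≤ (2 / s) ^ k * exp (-(s / 2) * x) * (exp (s / 2 * x) * exp (-(s / 2 * x))) := by gcongr
    _ = (2 / s) ^ k * exp (-(s / 2) * x) := by rw [← exp_add, add_neg_cancel, exp_zero, mul_one]

lemma gaussianQ_sqrt_mul_gammaPDF_le {s x : ℝ} (hs : 0 < s) (hx : 0 ≤ x) (k : ℕ) :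
    gaussianQ √(2 * s * x) * x ^ k * exp (-x) / Gamma (k + 1)
      ≤ (2 / s) ^ k / 2 * exp (-(s / 2) * x) := by
  have hQ : gaussianQ √(2 * s * x) ≤ exp (-(s * x)) / 2 := by
    have h := gaussianQ_le_half_exp (sqrt_nonneg (2 * s * x))
    rwa [sq_sqrt (by positivity), show -(2 * s * x) / 2 = -(s * x) by ring] at h
  rw [Gamma_nat_eq_factorial]
  calc gaussianQ √(2 * s * x) * x ^ k * exp (-x) / k !
      ≤ exp (-(s * x)) / 2 * x ^ k * 1 / k ! := by
        have := gaussianQ_nonneg √(2 * s * x)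
        have : exp (-x) ≤ 1 := exp_le_one_iff.2 (by linarith)
        gcongr
    _ = (x ^ k / k ! * exp (-(s * x))) / 2 := by ring
    _ ≤ (2 / s) ^ k * exp (-(s / 2) * x) / 2 := by
        gcongr ?_ / 2; exact pow_div_factorial_mul_exp_neg_le hs hx k
    _ = (2 / s) ^ k / 2 * exp (-(s / 2) * x) := by ring

lemma setIntegral_Ioi_gaussianQ_sqrt_mul_gammaPDF_le {s a : ℝ} (hs : 0 < s) (ha : 0 ≤ a)
    (k : ℕ) :
    ∫ x in Ioi a, gaussianQ √(2 * s * x) * x ^ k * exp (-x) / Gamma (k + 1)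
      ≤ (2 / s) ^ (k + 1) / 2 * exp (-(s * a / 2)) := by
  calc ∫ x in Ioi a, gaussianQ √(2 * s * x) * x ^ k * exp (-x) / Gamma (k + 1)
      ≤ ∫ x in Ioi a, (2 / s) ^ k / 2 * exp (-(s / 2) * x) := by
        refine integral_mono_of_nonneg ?_
          ((exp_neg_integrableOn_Ioi _ (by positivity)).const_mul _) ?_
        all_goals filter_upwards [ae_restrict_mem measurableSet_Ioi] with x (hx : a < x)
        · have := gaussianQ_nonneg √(2 * s * x)
          have : 0 < x := ha.trans_lt hx
          positivity
        · exact gaussianQ_sqrt_mul_gammaPDF_le hs (ha.trans hx.le) k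
    _ = (2 / s) ^ (k + 1) / 2 * exp (-(s * a / 2)) := by
        rw [integral_const_mul, integral_exp_mul_Ioi (by linarith), pow_succ]
        field_simp

lemma exp_neg_one_div_le {y : ℝ} (hy : 0 < y) : exp (-(1 / y)) ≤ 2 * y ^ 2 := by
  have h := quadratic_le_exp_of_nonneg (one_div_pos.2 hy).le
  rw [exp_neg, inv_le_comm₀ (exp_pos _) (by positivity)]
  calc (2 * y ^ 2)⁻¹ = (1 / y) ^ 2 / 2 := by field_simp
    _ ≤ exp (1 / y) := by linarith [one_div_pos.2 hy]

lemma div_two_mul_exp_neg_one_div_two_mul_le {C δ : ℝ} (hC : 0 < C) (hδ : 0 < δ)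
    (hδC : δ < (4 * C)⁻¹) : C / 2 * exp (-(1 / (2 * δ))) ≤ δ := by
  have h4Cδ : 4 * C * δ < 1 := by
    rw [← lt_inv_mul_iff₀ (by positivity), mul_one]; exact hδC
  calc C / 2 * exp (-(1 / (2 * δ))) ≤ C / 2 * (2 * (2 * δ) ^ 2) := by
        gcongr; exact exp_neg_one_div_le (by positivity)
    _ = 4 * C * δ * δ := by ring
    _ ≤ δ := by nlinarith

/-- Tail integral bound used in the precoding Proposition:
`∫_{t/(δP)}^∞ Q(√(2xP/t)) x^{t-1} e^{-x}/Γ(t) dx ≤ δ/P^t` for all small enough `δ`. -/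
theorem precoding_tail_bound (t : ℕ) (ht : 1 ≤ t) :
    ∃ δ₀ : ℝ, 0 < δ₀ ∧ ∀ δ : ℝ, 0 < δ → δ < δ₀ → ∀ P : ℝ, 0 < P →
      (∫ x in Set.Ioi ((t : ℝ) / (δ * P)),
          gaussianQ (Real.sqrt (2 * x * P / t)) * x ^ (t - 1) * Real.exp (-x) / Real.Gamma t)
        ≤ δ / P ^ t := by
  obtain ⟨k, rfl⟩ := Nat.exists_eq_add_of_le' ht
  set C : ℝ := (2 * (k + 1 : ℝ)) ^ (k + 1)
  have hC : 0 < C := by positivity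
  refine ⟨(4 * C)⁻¹, by positivity, fun δ hδ hδ₀ P hP ↦ ?_⟩
  have hs : 0 < P / (k + 1) := by positivity
  push_cast
  simp_rw [show ∀ x : ℝ, 2 * x * P / (k + 1) = 2 * (P / (k + 1)) * x from fun x ↦ by ring]
  calc _ ≤ (2 / (P / (k + 1))) ^ (k + 1) / 2 * exp (-(P / (k + 1) * ((k + 1) / (δ * P)) / 2)) :=
        setIntegral_Ioi_gaussianQ_sqrt_mul_gammaPDF_le hs (by positivity) k
    _ = C / 2 * exp (-(1 / (2 * δ))) / P ^ (k + 1) := by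
        rw [show P / (k + 1) * ((k + 1) / (δ * P)) / 2 = 1 / (2 * δ) by field_simp,
          div_div_eq_mul_div, div_pow]
        ring
    _ ≤ δ / P ^ (k + 1) := by
        gcongr
        exact div_two_mul_exp_neg_one_div_two_mul_le hC hδ hδ₀
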